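/- Let J be a generalized Jordan triple system over a field F of characteristic ≠ 2, 3 containing an element e such that eee = e, eex = xee for all x ∈ J, and the map U_e: x ↦ exe is surjective. Let J^{(e)} be the homotope algebra with product x·y := xey, and for x, y ∈ J let D_{x,y} := L_{[x,y]} − [L_x, L_y], where L_a(b) = a·b and [x,y] = x·y − y·x are computed in J^{(e)}. Then D_{x,y} is a derivation of J^{(e)} for all x, y ∈ J: D_{x,y}(a·b) = D_{x,y}(a)·b + a·D_{x,y}(b) for all a, b ∈ J. -/
import Mathlib


/-- The operator `D_{x,y} = L_{[x,y]} − [L_x, L_y]` of the homotope algebra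
`J⁽ᵉ⁾` (product `x·y := xey`), applied to `c`. -/
def Dhom {F J : Type*} [Field F] [AddCommGroup J] [Module F J]
    (T : J →ₗ[F] J →ₗ[F] J →ₗ[F] J) (e x y c : J) : J :=
  T (T x e y - T y e x) e c - (T x e (T y e c) - T y e (T x e c))

/-- Let `J` be a generalized Jordan triple system over a field of characteristic
`≠ 2, 3` with an element `e` such that `eee = e`, `eex = xee` for all `x`, and
`U_e : x ↦ exe` surjective.  Then every operator `D_{x,y}` of the homotope
algebra `J⁽ᵉ⁾` is a derivation of `J⁽ᵉ⁾`. -/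
theorem stmt7 {F J : Type*} [Field F] [AddCommGroup J] [Module F J]
    (hchar2 : (2 : F) ≠ 0) (hchar3 : (3 : F) ≠ 0)
    (T : J →ₗ[F] J →ₗ[F] J →ₗ[F] J)
    (gjts : ∀ u v x y z : J,
      T u v (T x y z) = T (T u v x) y z - T x (T v u y) z + T x y (T u v z))
    (e : J) (he : T e e e = e) (hee : ∀ x : J, T e e x = T x e e)
    (hsurj : Function.Surjective (fun x : J => T e x e)) :
    ∀ x y a b : J,
      Dhom T e x y (T a e b) =
        T (Dhom T e x y a) e b + T a e (Dhom T e x y b) := by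
  -- L ∘ K = K
  have hLK : ∀ m : J, T (T e m e) e e = T e m e := by
    intro m
    have r1 := gjts e e e m e
    have r2 := gjts e m e e e
    simp only [he, hee] at r1 r2
    have h3 : (3 : F) • (T (T e m e) e e) = (3 : F) • (T e m e) := by
      linear_combination (norm := module) r1 - r2
    have := congrArg (fun z : J => (3 : F)⁻¹ • z) h3
    simpa [smul_smul, inv_mul_cancel₀ hchar3] using this
  -- K ∘ L = K
  have hKL : ∀ m : J, T e (T m e e) e = T e m e := by
    intro m
    have r1 := gjts e e e m e
    simp only [he, hee] at r1
    linear_combination (norm := module) r1 - hLK m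
  -- K³ = K
  have hK3 : ∀ m : J, T e (T e (T e m e) e) e = T e m e := by
    intro m
    have r := gjts (T e m e) e e e e
    simp only [he, hee, hLK] at r
    linear_combination (norm := module) r
  -- key lemma:  (U_e x) y e = e (y e x) e
  have key : ∀ x y : J, T (T e x e) y e = T e (T y e x) e := by
    intro x y
    obtain ⟨p, hp⟩ := hsurj x
    obtain ⟨q, hq⟩ := hsurj y
    simp only at hp hq
    subst hp hq
    have h1 := gjts e e (T e (T e p e) e) e (T e (T e q e) e)
    have h2 := gjts e e (T e (T e q e) e) e (T e (T e p e) e)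
    have h3 := gjts e (T e q e) e (T e p e) e
    have h4 := gjts (T e (T e p e) e) e e e (T e (T e q e) e)
    have h5 := gjts (T e (T e p e) e) e (T e (T e q e) e) e e
    have h6 := gjts (T e (T e q e) e) e e e (T e (T e p e) e)
    have h7 := gjts (T e (T e q e) e) e (T e (T e p e) e) e e
    simp only [he, hee, hLK, hKL, hK3] at h1 h2 h3 h4 h5 h6 h7
    linear_combination (norm := module)
      -(2 : F) • h1 + (2 : F) • h2 - h3 - h4 - h5 + h6 + h7
  intro x y a b
  have hD : ∀ c : J, Dhom T e x y c = T y (T e x e) c - T (T y e x) e c := by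
    intro c
    have g := gjts x e y e c
    unfold Dhom
    simp only [map_sub, LinearMap.sub_apply]
    linear_combination (norm := module) -g
  simp only [hD]
  have g1 := gjts y (T e x e) a e b
  have g2 := gjts (T y e x) e a e b
  have k2 : T a (T (T e x e) y e) b = T a (T e (T y e x) e) b := by rw [key x y]
  simp only [map_sub, LinearMap.sub_apply]
  linear_combination (norm := module) g1 - g2 - k2
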